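/- If A is a tree automaton that is a quasi-model for R, L(A) is non-empty, and every term of L(A) contains a redex, then R is non-terminating. -/
import Mathlib


inductive Tm (F : Type) (ar : F → ℕ) (V : Type) : Type
  | var : V → Tm F ar V
  | fn : (f : F) → (Fin (ar f) → Tm F ar V) → Tm F ar V

def Tm.subst {F : Type} {ar : F → ℕ} {V W : Type} (σ : V → Tm F ar W) :
    Tm F ar V → Tm F ar W
  | .var x => σ x
  | .fn f ts => .fn f (fun i => (ts i).subst σ)

inductive Rew {F : Type} {ar : F → ℕ} {V W : Type}
    (R : Set (Tm F ar V × Tm F ar V)) : Tm F ar W → Tm F ar W → Prop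
  | rule (l r : Tm F ar V) (σ : V → Tm F ar W) :
      (l, r) ∈ R → Rew R (l.subst σ) (r.subst σ)
  | congr (f : F) (ts : Fin (ar f) → Tm F ar W) (i : Fin (ar f)) {s' : Tm F ar W} :
      Rew R (ts i) s' → Rew R (.fn f ts) (.fn f (Function.update ts i s'))

def interp {F : Type} {ar : F → ℕ} {V Q : Type}
    (δ : (f : F) → (Fin (ar f) → Q) → Q → Prop) (α : V → Set Q) :
    Tm F ar V → Set Q
  | .var x => α x
  | .fn f ts => {q | ∃ qs : Fin (ar f) → Q, (∀ i, qs i ∈ interp δ α (ts i)) ∧ δ f qs q}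

lemma interp_subst {F : Type} {ar : F → ℕ} {V W Q : Type}
    (δ : (f : F) → (Fin (ar f) → Q) → Q → Prop) (α : W → Set Q)
    (σ : V → Tm F ar W) : ∀ t : Tm F ar V,
    interp δ α (t.subst σ) = interp δ (fun x => interp δ α (σ x)) t
  | .var x => rfl
  | .fn f ts => by
      show interp δ α (.fn f fun i => (ts i).subst σ) = _
      ext q
      simp only [interp, Set.mem_setOf_eq]
      constructor <;> rintro ⟨qs, h1, h2⟩ <;>
        refine ⟨qs, fun i => ?_, h2⟩
      · rw [← interp_subst δ α σ (ts i)]; exact h1 i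
      · rw [interp_subst δ α σ (ts i)]; exact h1 i

lemma rew_preserves {F : Type} {ar : F → ℕ} {V W Q : Type}
    (δ : (f : F) → (Fin (ar f) → Q) → Q → Prop)
    (R : Set (Tm F ar V × Tm F ar V))
    (hquasi : ∀ l r, (l, r) ∈ R → ∀ α : V → Set Q, interp δ α l ⊆ interp δ α r)
    {t s : Tm F ar W} (α : W → Set Q) (h : Rew R t s) :
    interp δ α t ⊆ interp δ α s := by
  induction h with
  | rule l r σ hR =>
      intro q hq
      rw [interp_subst] at hq ⊢
      exact hquasi l r hR _ hq
  | congr f ts i h ih =>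
      rintro q ⟨qs, h1, h2⟩
      refine ⟨qs, fun j => ?_, h2⟩
      rcases eq_or_ne j i with rfl | hji
      · rw [Function.update_self]; exact ih (h1 j)
      · rw [Function.update_of_ne hji]; exact h1 j

/-- a quasi-model automaton with non-empty language all of whose
terms contain a redex proves non-termination. -/
theorem nonterminating_of_quasiModel
    {F : Type} {ar : F → ℕ} {V Q : Type}
    (δ : (f : F) → (Fin (ar f) → Q) → Q → Prop) (Facc : Set Q)
    (R : Set (Tm F ar V × Tm F ar V))
    (hquasi : ∀ l r, (l, r) ∈ R → ∀ α : V → Set Q, interp δ α l ⊆ interp δ α r)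
    (hne : {t : Tm F ar Empty | (interp δ Empty.elim t ∩ Facc).Nonempty}.Nonempty)
    (hredex : ∀ t : Tm F ar Empty,
      (interp δ Empty.elim t ∩ Facc).Nonempty → ∃ s, Rew R t s) :
    ∃ seq : ℕ → Tm F ar Empty, ∀ n, Rew R (seq n) (seq (n + 1)) := by
  obtain ⟨t0, ht0⟩ := hne
  have step : ∀ t : Tm F ar Empty, (interp δ Empty.elim t ∩ Facc).Nonempty →
      ∃ s, Rew R t s ∧ (interp δ Empty.elim s ∩ Facc).Nonempty := by
    intro t ht
    obtain ⟨s, hs⟩ := hredex t ht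
    obtain ⟨q, hq1, hq2⟩ := ht
    exact ⟨s, hs, ⟨q, rew_preserves δ R hquasi _ hs hq1, hq2⟩⟩
  choose f hf1 hf2 using step
  let g : ℕ → {t : Tm F ar Empty // (interp δ Empty.elim t ∩ Facc).Nonempty} := fun n =>
    Nat.rec ⟨t0, ht0⟩ (fun _ p => ⟨f p.1 p.2, hf2 p.1 p.2⟩) n
  exact ⟨fun n => (g n).1, fun n => hf1 (g n).1 (g n).2⟩
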